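/- For every positive definite symmetric bilinear form B on su(2) there exist a Lie algebra automorphism φ of su(2) and real numbers λ ≥ μ ≥ ν > 0 such that B(φ(X_i), φ(X_j)) = 0 for all i ≠ j, B(φ(X1), φ(X1)) = λ, B(φ(X2), φ(X2)) = μ, and B(φ(X3), φ(X3)) = ν. (That is, every left invariant metric on SU(2) is represented, up to automorphism, by the diagonal matrix M(λ,μ,ν) in the standard basis.) -/

import Mathlib

/-!
In the coordinates given by `X1, X2, X3` the bracket of `su(2)` is the cross product on `ℝ³`.
Since `(A u) × (A v) = (adj A)ᵀ (u × v)` and `adj A = Aᵀ` for `A ∈ SO(3)`, every rotation is the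
matrix of a Lie algebra automorphism of `su(2)`. By the spectral theorem the Gram matrix of `B` is
diagonalised by an orthogonal matrix; reordering its columns puts the eigenvalues in decreasing
order, and changing the sign of one column makes its determinant `1`. The eigenvalues are
positive because they are values of `B` on nonzero vectors.
-/

open Matrix Complex

attribute [local instance 100] LieRing.ofAssociativeRing

/-- `su(2)`: the real Lie algebra of traceless skew-Hermitian `2 × 2` complex matrices. -/
def su2 : LieSubalgebra ℝ (Matrix (Fin 2) (Fin 2) ℂ) where
  carrier := {A | Aᴴ = -A ∧ A.trace = 0}
  zero_mem' := by simp
  add_mem' := by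
    rintro A B ⟨hA1, hA2⟩ ⟨hB1, hB2⟩
    refine ⟨?_, ?_⟩
    · rw [conjTranspose_add, hA1, hB1]; abel
    · rw [trace_add, hA2, hB2]; ring
  smul_mem' := by
    rintro c A ⟨h1, h2⟩
    refine ⟨?_, ?_⟩
    · rw [conjTranspose_smul, h1]; simp
    · rw [trace_smul, h2]; simp
  lie_mem' := by
    rintro A B ⟨hA1, hA2⟩ ⟨hB1, hB2⟩
    refine ⟨?_, ?_⟩
    · simp only [Ring.lie_def, conjTranspose_sub, conjTranspose_mul, hA1, hB1]
      simp [mul_comm]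
    · simp only [Ring.lie_def, trace_sub, trace_mul_comm A B, sub_self]

/-- `X1 = (1/2)[[i,0],[0,−i]]`, as an element of `su(2)`. -/
noncomputable def X1 : ↥su2 :=
  ⟨!![I/2, 0; 0, -(I/2)], by
    constructor
    · ext i j
      fin_cases i <;> fin_cases j <;>
        norm_num [conjTranspose_apply, Complex.ext_iff]
    · simp [Matrix.trace_fin_two]⟩

/-- `X2 = (1/2)[[0,−1],[1,0]]`, as an element of `su(2)`. -/
noncomputable def X2 : ↥su2 :=
  ⟨!![0, -(1/2 : ℂ); 1/2, 0], by
    constructor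
    · ext i j
      fin_cases i <;> fin_cases j <;>
        norm_num [conjTranspose_apply, Complex.ext_iff]
    · simp [Matrix.trace_fin_two]⟩

/-- `X3 = (1/2)[[0,−i],[−i,0]]`, as an element of `su(2)`. -/
noncomputable def X3 : ↥su2 :=
  ⟨!![0, -(I/2); -(I/2), 0], by
    constructor
    · ext i j
      fin_cases i <;> fin_cases j <;>
        norm_num [conjTranspose_apply, Complex.ext_iff]
    · simp [Matrix.trace_fin_two]⟩

open Module

section OrthogonalDiagonalization

variable {n : Type*} [Fintype n] {R : Type*} [CommRing R]

theorem Matrix.submatrix_transpose_mul_mul_submatrix (U M : Matrix n n R) (σ : Equiv.Perm n) :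
    (U.submatrix id σ)ᵀ * M * U.submatrix id σ = (Uᵀ * M * U).submatrix σ σ := by
  rw [submatrix_mul _ _ _ id _ Function.bijective_id,
    submatrix_mul _ _ _ id _ Function.bijective_id, transpose_submatrix, submatrix_id_id]

variable [DecidableEq n]

theorem Matrix.submatrix_id_mem_orthogonalGroup {U : Matrix n n R}
    (hU : U ∈ orthogonalGroup n R) (σ : Equiv.Perm n) :
    U.submatrix id σ ∈ orthogonalGroup n R := by
  rw [mem_orthogonalGroup_iff'] at hU ⊢
  rw [← Matrix.mul_one (U.submatrix id σ)ᵀ, submatrix_transpose_mul_mul_submatrix,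
    Matrix.mul_one, hU, submatrix_one_equiv]

theorem Matrix.exists_mem_specialOrthogonalGroup_transpose_mul_mul_eq_diagonal
    {U M : Matrix n n R} {d : n → R} (hU : U ∈ orthogonalGroup n R) (i₀ : n)
    (h : Uᵀ * M * U = diagonal d) :
    ∃ V ∈ specialOrthogonalGroup n R, Vᵀ * M * V = diagonal d := by
  -- flip the sign of column `i₀` of `U` when `det U = -1`
  set ε : n → R := Function.update 1 i₀ U.det
  have hdet : U.det * U.det = 1 := by
    simpa using congrArg det ((mem_orthogonalGroup_iff' n R).mp hU)
  have hε : ∀ i, ε i * ε i = 1 := by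
    intro i
    rcases eq_or_ne i i₀ with rfl | h <;> simp [ε, *]
  refine ⟨U * diagonal ε, mem_specialOrthogonalGroup_iff.mpr ⟨Submonoid.mul_mem _ hU ?_, ?_⟩, ?_⟩
  · rw [mem_orthogonalGroup_iff', diagonal_transpose, diagonal_mul_diagonal]
    simp [hε]
  · rw [det_mul, det_diagonal, Finset.prod_update_of_mem (Finset.mem_univ _)]
    simp [hdet]
  · calc (U * diagonal ε)ᵀ * M * (U * diagonal ε) = diagonal ε * (Uᵀ * M * U) * diagonal ε := by
          simp only [transpose_mul, diagonal_transpose, Matrix.mul_assoc]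
      _ = diagonal d := by
          rw [h, diagonal_mul_diagonal, diagonal_mul_diagonal]
          congr 1
          ext i
          linear_combination d i * hε i

theorem Matrix.IsHermitian.exists_mem_orthogonalGroup_transpose_mul_mul_eq_diagonal
    {M : Matrix n n ℝ} (hM : M.IsHermitian) :
    ∃ U ∈ orthogonalGroup n ℝ, Uᵀ * M * U = diagonal hM.eigenvalues := by
  refine ⟨hM.eigenvectorUnitary, hM.eigenvectorUnitary.2, ?_⟩
  simpa [Unitary.conjStarAlgAut_star_apply, star_eq_conjTranspose] using
    hM.conjStarAlgAut_star_eigenvectorUnitary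

end OrthogonalDiagonalization

theorem Matrix.IsHermitian.exists_mem_specialOrthogonalGroup_transpose_mul_mul_eq_diagonal_antitone
    {k : ℕ} [NeZero k] {M : Matrix (Fin k) (Fin k) ℝ} (hM : M.IsHermitian) :
    ∃ V ∈ specialOrthogonalGroup (Fin k) ℝ, ∃ d : Fin k → ℝ, Antitone d ∧
      Vᵀ * M * V = diagonal d := by
  obtain ⟨U, hU, hUM⟩ := hM.exists_mem_orthogonalGroup_transpose_mul_mul_eq_diagonal
  set σ : Equiv.Perm (Fin k) := Fin.revPerm.trans (Tuple.sort hM.eigenvalues)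
  have hσ : Antitone (hM.eigenvalues ∘ σ) :=
    (Tuple.monotone_sort hM.eigenvalues).comp_antitone Fin.rev_anti
  obtain ⟨V, hV, hVM⟩ := exists_mem_specialOrthogonalGroup_transpose_mul_mul_eq_diagonal
    (submatrix_id_mem_orthogonalGroup hU σ) 0
    (by rw [submatrix_transpose_mul_mul_submatrix, hUM, submatrix_diagonal_equiv])
  exact ⟨V, hV, _, hσ, hVM⟩

theorem Matrix.adjugate_eq_transpose_of_mem_specialOrthogonalGroup {n R : Type*} [Fintype n]
    [DecidableEq n] [CommRing R] {A : Matrix n n R} (hA : A ∈ specialOrthogonalGroup n R) :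
    adjugate A = Aᵀ := by
  obtain ⟨hAo, hdet⟩ := mem_specialOrthogonalGroup_iff.mp hA
  calc adjugate A = Aᵀ * A * adjugate A := by
        rw [(mem_orthogonalGroup_iff' n R).mp hAo, Matrix.one_mul]
    _ = Aᵀ := by rw [Matrix.mul_assoc, mul_adjugate, hdet, one_smul, Matrix.mul_one]

theorem Matrix.mulVec_cross_mulVec {R : Type*} [CommRing R] (A : Matrix (Fin 3) (Fin 3) R)
    (u v : Fin 3 → R) : (A *ᵥ u) ⨯₃ (A *ᵥ v) = (adjugate A)ᵀ *ᵥ (u ⨯₃ v) := by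
  ext i
  fin_cases i <;>
    simp [cross_apply, adjugate_fin_three, mulVec, dotProduct, Fin.sum_univ_three] <;> ring

theorem Matrix.mulVec_cross_of_mem_specialOrthogonalGroup {R : Type*} [CommRing R]
    {A : Matrix (Fin 3) (Fin 3) R} (hA : A ∈ specialOrthogonalGroup (Fin 3) R)
    (u v : Fin 3 → R) : A *ᵥ (u ⨯₃ v) = (A *ᵥ u) ⨯₃ (A *ᵥ v) := by
  rw [mulVec_cross_mulVec, adjugate_eq_transpose_of_mem_specialOrthogonalGroup hA,
    transpose_transpose]

namespace Module.Basis

variable {R L : Type*} [CommRing R] [LieRing L] [LieAlgebra R L]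

noncomputable def lieEquivOfMemSpecialOrthogonalGroup (b : Basis (Fin 3) R L)
    (hb : ∀ x y : L, b.equivFun ⁅x, y⁆ = b.equivFun x ⨯₃ b.equivFun y)
    {A : Matrix (Fin 3) (Fin 3) R} (hA : A ∈ specialOrthogonalGroup (Fin 3) R) : L ≃ₗ⁅R⁆ L :=
  have hAo := (mem_specialOrthogonalGroup_iff.mp hA).1
  { toLinOfInv b b ((mem_orthogonalGroup_iff (Fin 3) R).mp hAo)
      ((mem_orthogonalGroup_iff' (Fin 3) R).mp hAo) with
    map_lie' := fun {x y} => b.equivFun.injective <| by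
      have h z : b.equivFun (toLin b b A z) = A *ᵥ b.equivFun z := by simp [Matrix.repr_toLin]
      change b.equivFun (toLin b b A ⁅x, y⁆) = b.equivFun ⁅toLin b b A x, toLin b b A y⁆
      rw [h, hb, hb, h, h, mulVec_cross_of_mem_specialOrthogonalGroup hA] }

theorem toMatrix_lieEquivOfMemSpecialOrthogonalGroup (b : Basis (Fin 3) R L)
    (hb : ∀ x y : L, b.equivFun ⁅x, y⁆ = b.equivFun x ⨯₃ b.equivFun y)
    {A : Matrix (Fin 3) (Fin 3) R} (hA : A ∈ specialOrthogonalGroup (Fin 3) R) :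
    LinearMap.toMatrix b b (b.lieEquivOfMemSpecialOrthogonalGroup hb hA : L →ₗ[R] L) = A :=
  LinearMap.toMatrix_toLin b b A

end Module.Basis

namespace su2

lemma re_apply_zero_zero (x : ↥su2) : ((x : Matrix (Fin 2) (Fin 2) ℂ) 0 0).re = 0 := by
  have h := congrArg Complex.re (congrFun₂ x.2.1 0 0)
  simp only [conjTranspose_apply, RCLike.star_def, Matrix.neg_apply, conj_re, neg_re] at h
  linarith

lemma apply_one_one (x : ↥su2) :
    (x : Matrix (Fin 2) (Fin 2) ℂ) 1 1 = -(x : Matrix (Fin 2) (Fin 2) ℂ) 0 0 := by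
  linear_combination (trace_fin_two _).symm.trans x.2.2

lemma apply_one_zero (x : ↥su2) :
    (x : Matrix (Fin 2) (Fin 2) ℂ) 1 0 = -star ((x : Matrix (Fin 2) (Fin 2) ℂ) 0 1) := by
  have h := congrFun₂ x.2.1 0 1
  rw [conjTranspose_apply] at h
  rw [← star_star (x.1 1 0), h, neg_apply, star_neg]

-- `a • X1 + b • X2 + c • X3 = (1/2) [[a i, -(b + c i)], [b - c i, -a i]]`
noncomputable def coordEquiv : ↥su2 ≃ₗ[ℝ] (Fin 3 → ℝ) where
  toFun x := ![2 * ((x : Matrix (Fin 2) (Fin 2) ℂ) 0 0).im,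
    -2 * ((x : Matrix (Fin 2) (Fin 2) ℂ) 0 1).re, -2 * ((x : Matrix (Fin 2) (Fin 2) ℂ) 0 1).im]
  invFun v := v 0 • X1 + v 1 • X2 + v 2 • X3
  map_add' x y := by
    ext k; fin_cases k <;> simp <;> ring
  map_smul' c x := by
    ext k; fin_cases k <;> simp <;> ring
  left_inv x := by
    have h00 := re_apply_zero_zero x
    apply Subtype.ext
    ext i j
    fin_cases i <;> fin_cases j <;>
      simp [X1, X2, X3, Complex.ext_iff, apply_one_one, apply_one_zero, h00] <;>
      (try constructor) <;> ring
  right_inv v := by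
    ext k; fin_cases k <;> simp [X1, X2, X3] <;> ring

noncomputable def basis : Basis (Fin 3) ℝ ↥su2 := Basis.ofEquivFun coordEquiv

lemma coe_basis : ⇑basis = ![X1, X2, X3] := by
  ext1 i
  fin_cases i <;> simp [basis, coordEquiv]

lemma lie_X1_X2 : ⁅X1, X2⁆ = X3 := by
  ext i j : 2
  fin_cases i <;> fin_cases j <;> simp [X1, X2, X3, Ring.lie_def, Complex.ext_iff] <;> ring

lemma lie_X2_X3 : ⁅X2, X3⁆ = X1 := by
  ext i j : 2
  fin_cases i <;> fin_cases j <;> simp [X1, X2, X3, Ring.lie_def, Complex.ext_iff] <;> ring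

lemma lie_X3_X1 : ⁅X3, X1⁆ = X2 := by
  ext i j : 2
  fin_cases i <;> fin_cases j <;> simp [X1, X2, X3, Ring.lie_def, Complex.ext_iff] <;> ring

lemma basis_equivFun_lie (x y : ↥su2) :
    basis.equivFun ⁅x, y⁆ = basis.equivFun x ⨯₃ basis.equivFun y := by
  have h : (LinearMap.mk₂ ℝ (fun x y : ↥su2 => ⁅x, y⁆) add_lie smul_lie lie_add lie_smul).compr₂
      basis.equivFun.toLinearMap =
      crossProduct.compl₁₂ basis.equivFun.toLinearMap basis.equivFun.toLinearMap := by
    refine LinearMap.ext_basis basis basis fun i j => ?_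
    fin_cases i <;> fin_cases j <;>
      simp only [coe_basis, LinearMap.compr₂_apply, LinearMap.mk₂_apply, LinearMap.compl₁₂_apply,
        Fin.zero_eta, Fin.mk_one, Fin.reduceFinMk, cons_val, lie_self, lie_X1_X2, lie_X2_X3,
        lie_X3_X1, ← lie_skew X2 X1, ← lie_skew X3 X2, ← lie_skew X1 X3] <;>
      simp [basis, coordEquiv, X1, X2, X3, cross_apply]
  exact LinearMap.congr_fun₂ h x y

end su2

/-- Every positive definite symmetric bilinear form on `su(2)` (i.e. every left invariant
metric on `SU(2)`) is represented, up to a Lie algebra automorphism, by the diagonal matrix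
`M(λ,μ,ν)` with `λ ≥ μ ≥ ν > 0` in the standard basis `X1, X2, X3`. -/
theorem metric_diagonalizable (B : ↥su2 →ₗ[ℝ] ↥su2 →ₗ[ℝ] ℝ)
    (hsymm : ∀ x y : ↥su2, B x y = B y x)
    (hpos : ∀ x : ↥su2, x ≠ 0 → 0 < B x x) :
    ∃ (φ : ↥su2 ≃ₗ⁅ℝ⁆ ↥su2) (l m n : ℝ),
      l ≥ m ∧ m ≥ n ∧ n > 0 ∧
      (∀ i j : Fin 3, i ≠ j → B (φ (![X1, X2, X3] i)) (φ (![X1, X2, X3] j)) = 0) ∧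
      B (φ X1) (φ X1) = l ∧ B (φ X2) (φ X2) = m ∧ B (φ X3) (φ X3) = n := by
  set G := LinearMap.toMatrix₂ su2.basis su2.basis B
  have hG : G.IsHermitian := by
    ext i j
    simp [G, LinearMap.toMatrix₂_apply, hsymm]
  obtain ⟨A, hA, d, hd, hAGA⟩ :=
    hG.exists_mem_specialOrthogonalGroup_transpose_mul_mul_eq_diagonal_antitone
  set φ := su2.basis.lieEquivOfMemSpecialOrthogonalGroup su2.basis_equivFun_lie hA
  have hBφ : ∀ i j, B (φ (![X1, X2, X3] i)) (φ (![X1, X2, X3] j)) = diagonal d i j := by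
    intro i j
    rw [← su2.coe_basis, ← hAGA, ← su2.basis.toMatrix_lieEquivOfMemSpecialOrthogonalGroup
      su2.basis_equivFun_lie hA, ← LinearMap.toMatrix₂_compl₁₂, LinearMap.toMatrix₂_apply]
    rfl
  have hd_pos : ∀ i, 0 < d i := fun i => by
    simpa [hBφ] using hpos (φ (![X1, X2, X3] i)) (by simp [← su2.coe_basis, su2.basis.ne_zero])
  refine ⟨φ, d 0, d 1, d 2, hd (by decide), hd (by decide), hd_pos 2, fun i j hij => ?_,
    by simpa using hBφ 0 0, by simpa using hBφ 1 1, by simpa using hBφ 2 2⟩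
  rw [hBφ, diagonal_apply_ne _ hij]
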